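/- arXiv:2605.26258 — 7 statements merged into one kernel-verified Lean document; each statement's English description precedes it below -/
import Mathlib

section
/- For every positive integer t, the 2t × 2t integer matrix 𝖬 is totally nonnegative: for every s ≥ 1 and all strictly increasing sequences of row indices i_1 < ⋯ < i_s and column indices j_1 < ⋯ < j_s in {1, …, 2t}, the determinant of the s × s submatrix (𝖬_{i_k, j_l})_{1 ≤ k, l ≤ s} is nonnegative. -/
/-!
The rows of `𝖬` are coefficient vectors of polynomials `x ^ a * (1 + x) ^ b`: `(1 + x) ^ (t + i)`
in the top half and `x ^ i * (1 + x) ^ (2t - 1 - i)` in the bottom half. By Pascal's rule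
`x^a (1+x)^(b+1) = x^a (1+x)^b + x^(a+1) (1+x)^b` they are reached from the identity matrix by
rounds of row operations `row i += row (i ± 1)`: first every row `i` becomes
`x ^ i * (1 + x) ^ min t (2t - 1 - i)`, then each top row `i` is merged `i` times with its
predecessor. Adding to every row a nonnegative multiple of a neighbouring row preserves total
nonnegativity, since by multilinearity each new minor is a nonnegative combination of old minors
whose row selections are still monotone.
-/

/-- The `2t × 2t` integer block matrix `𝖬 = [[M1, M2], [0, M3]]`, where (in
1-based indices) `M1 = (C(t+i−1, j−1))`, `M2 = (C(t+i−1, t+j−1))` and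
`M3 = (C(t−i, j−i))` are `t × t` matrices.  In 0-based global indices
`i, j : Fin (2t)`, the top half (`i < t`) has entry `C(t+i, j)` and the bottom
half (`i ≥ t`) has entry `C(2t−i−1, j−i)` for `i ≤ j` and `0` otherwise. -/
def fujimotoM (t : ℕ) : Matrix (Fin (2 * t)) (Fin (2 * t)) ℤ :=
  fun i j =>
    if i.val < t then ((t + i.val).choose j.val : ℤ)
    else if i.val ≤ j.val then ((2 * t - i.val - 1).choose (j.val - i.val) : ℤ)
    else 0

open Polynomial

theorem Equiv.Perm.eq_one_of_strictMono {s : ℕ} {σ : Equiv.Perm (Fin s)} (hσ : StrictMono σ) :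
    σ = 1 :=
  Equiv.ext fun k => by
    simpa using DFunLike.congr_fun
      (Subsingleton.elim (hσ.orderIsoOfSurjective σ σ.surjective) (OrderIso.refl _)) k

namespace Matrix

variable {ι ι' κ κ' R : Type*} [CommRing R] [PartialOrder R]

def TotallyNonneg [Preorder ι] [Preorder κ] (A : Matrix ι κ R) : Prop :=
  ∀ (s : ℕ) (r : Fin s → ι) (c : Fin s → κ), StrictMono r → StrictMono c →
    0 ≤ (A.submatrix r c).det

namespace TotallyNonneg

theorem submatrix [Preorder ι] [Preorder κ] [Preorder ι'] [Preorder κ'] {A : Matrix ι κ R}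
    (hA : A.TotallyNonneg) {f : ι' → ι} {g : κ' → κ} (hf : StrictMono f) (hg : StrictMono g) :
    (A.submatrix f g).TotallyNonneg :=
  fun s r c hr hc => hA s (f ∘ r) (g ∘ c) (hf.comp hr) (hg.comp hc)

theorem det_submatrix_nonneg_of_monotone [PartialOrder ι] [Preorder κ] {A : Matrix ι κ R}
    (hA : A.TotallyNonneg) {s : ℕ} {r : Fin s → ι} {c : Fin s → κ} (hr : Monotone r)
    (hc : StrictMono c) : 0 ≤ (A.submatrix r c).det := by
  by_cases hinj : Function.Injective r
  · exact hA s r c (hr.strictMono_of_injective hinj) hc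
  · obtain ⟨a, b, hab, hne⟩ := Function.not_injective_iff.mp hinj
    rw [det_zero_of_row_eq hne (by ext l; simp [hab])]

end TotallyNonneg

variable [IsOrderedRing R]

theorem totallyNonneg_one [LinearOrder ι] : (1 : Matrix ι ι R).TotallyNonneg := by
  intro s r c hr hc
  rw [det_apply, Finset.sum_eq_single 1]
  · rw [Equiv.Perm.sign_one, one_smul]
    exact Finset.prod_nonneg fun k _ => by
      rw [Equiv.Perm.one_apply, submatrix_apply, one_apply]; split_ifs <;> simp
  · intro σ _ hσ
    suffices ∃ k, r (σ k) ≠ c k by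
      obtain ⟨k, hk⟩ := this
      rw [Finset.prod_eq_zero (Finset.mem_univ k) (by simp [hk]), smul_zero]
    by_contra! h
    exact hσ (Equiv.Perm.eq_one_of_strictMono fun a b hab => by
      rw [← hr.lt_iff_lt, h, h]; exact hc hab)
  · simp

theorem TotallyNonneg.of_row_eq_add_smul [LinearOrder ι] [Preorder κ] {A B : Matrix ι κ R}
    (hA : A.TotallyNonneg) (g : ι → R) (hg : ∀ i, 0 ≤ g i) (sh : ι → ι)
    (hsh : ∀ a b, a < b → max a (sh a) ≤ min b (sh b))
    (hB : ∀ i, B i = A i + g i • A (sh i)) : B.TotallyNonneg := by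
  classical
  intro s r c hr hc
  let ρ : Fin s → Bool → ι := fun k b => cond b (r k) (sh (r k))
  let w : Fin s → Bool → R := fun k b => cond b 1 (g (r k))
  let v : Fin s → Bool → Fin s → R := fun k b l => w k b * A (ρ k b) (c l)
  have hrows : B.submatrix r c = fun k => ∑ b, v k b := by
    ext k l
    simp [ρ, w, v, hB]
  have hexpand : det (fun k => ∑ b, v k b) = ∑ p : Fin s → Bool, det fun k => v k (p k) :=
    (detRowAlternating (n := Fin s) (R := R)).toMultilinearMap.map_sum v
  rw [hrows, hexpand]
  refine Finset.sum_nonneg fun p _ => ?_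
  have hρ : Monotone fun k => ρ k (p k) := by
    intro a b hab
    rcases hab.eq_or_lt with rfl | hlt
    · rfl
    have := hsh _ _ (hr hlt)
    rw [max_le_iff, le_min_iff, le_min_iff] at this
    simp only [ρ]
    cases p a <;> cases p b <;> simp [this]
  have hterm : det (fun k => v k (p k))
      = (∏ k, w k (p k)) * (A.submatrix (fun k => ρ k (p k)) c).det :=
    det_mul_column _ _
  rw [hterm]
  exact mul_nonneg (Finset.prod_nonneg fun k _ => by cases p k <;> simp [w, hg])
    (hA.det_submatrix_nonneg_of_monotone hρ hc)

end Matrix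

open Matrix

def coeffMatrix {R : Type*} [Semiring R] (p : ℕ → R[X]) : Matrix ℕ ℕ R :=
  Matrix.of fun i j => (p i).coeff j

theorem coeffMatrix_X_pow {R : Type*} [Semiring R] :
    coeffMatrix (fun i => (X : R[X]) ^ i) = 1 := by
  ext i j
  simp [coeffMatrix, coeff_X_pow, one_apply, eq_comm]

theorem Matrix.TotallyNonneg.coeffMatrix_of_eq_add {R : Type*} [CommRing R] [PartialOrder R]
    [IsOrderedRing R] {p q : ℕ → R[X]}
    (hp : (coeffMatrix p).TotallyNonneg) (g : ℕ → R) (hg : ∀ i, 0 ≤ g i) (sh : ℕ → ℕ)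
    (hsh : ∀ a b, a < b → max a (sh a) ≤ min b (sh b))
    (hq : ∀ i, q i = p i + C (g i) * p (sh i)) :
    (coeffMatrix q).TotallyNonneg :=
  hp.of_row_eq_add_smul g hg sh hsh fun i => by
    ext j
    simp [coeffMatrix, hq, coeff_C_mul]

noncomputable def upperBinomRow (n q i : ℕ) : ℤ[X] := X ^ i * (1 + X) ^ min q (n - i - 1)

theorem upperBinomRow_succ (n q i : ℕ) :
    upperBinomRow n (q + 1) i
      = upperBinomRow n q i + C (if q < n - i - 1 then 1 else 0) * upperBinomRow n q (i + 1) := by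
  unfold upperBinomRow
  split_ifs with h
  · rw [min_eq_left h, min_eq_left h.le, min_eq_left (by omega : q ≤ n - (i + 1) - 1)]
    simp only [C_1, one_mul]
    ring
  · rw [min_eq_right (by omega : n - i - 1 ≤ q + 1), min_eq_right (by omega : n - i - 1 ≤ q)]
    simp

theorem totallyNonneg_upperBinomRow (n q : ℕ) :
    (coeffMatrix (upperBinomRow n q)).TotallyNonneg := by
  induction q with
  | zero =>
    have hrows : upperBinomRow n 0 = fun i => X ^ i := by ext1 i; simp [upperBinomRow]
    rw [hrows, coeffMatrix_X_pow]
    exact totallyNonneg_one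
  | succ q ih =>
    refine ih.coeffMatrix_of_eq_add _ (fun i => by split_ifs <;> simp) (· + 1)
      (fun a b hab => by simp only [max_le_iff, le_min_iff]; omega) (upperBinomRow_succ n q)

noncomputable def fujimotoRow (t q i : ℕ) : ℤ[X] :=
  if i < t then X ^ (i - min q i) * (1 + X) ^ (t + min q i)
  else X ^ i * (1 + X) ^ (2 * t - i - 1)

theorem fujimotoRow_zero (t : ℕ) : fujimotoRow t 0 = upperBinomRow (2 * t) t := by
  ext1 i
  unfold fujimotoRow upperBinomRow
  split_ifs with h
  · rw [min_eq_left (by omega : t ≤ 2 * t - i - 1)]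
    simp
  · rw [min_eq_right (by omega : 2 * t - i - 1 ≤ t)]

theorem fujimotoRow_succ (t q i : ℕ) :
    fujimotoRow t (q + 1) i
      = fujimotoRow t q i + C (if q < i ∧ i < t then 1 else 0) * fujimotoRow t q (i - 1) := by
  unfold fujimotoRow
  by_cases hi : i < t
  · by_cases hq : q < i
    · obtain ⟨d, rfl⟩ : ∃ d, i = q + d + 1 := ⟨i - q - 1, by omega⟩
      have hi' : q + d + 1 - 1 < t := by omega
      simp only [hi, hi', hq, and_self, if_true, C_1, one_mul]
      rw [show min (q + 1) (q + d + 1) = q + 1 by omega, show min q (q + d + 1) = q by omega,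
        show min q (q + d + 1 - 1) = q by omega, show q + d + 1 - (q + 1) = d by omega,
        show q + d + 1 - q = d + 1 by omega, show q + d + 1 - 1 - q = d by omega]
      ring
    · have hmin : min (q + 1) i = min q i := by omega
      simp [hi, hq, hmin]
  · simp [hi]

theorem totallyNonneg_fujimotoRow (t q : ℕ) :
    (coeffMatrix (fujimotoRow t q)).TotallyNonneg := by
  induction q with
  | zero => simpa [fujimotoRow_zero] using totallyNonneg_upperBinomRow (2 * t) t
  | succ q ih =>
    refine ih.coeffMatrix_of_eq_add _ (fun i => by split_ifs <;> simp) (· - 1)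
      (fun a b hab => by simp only [max_le_iff, le_min_iff]; omega) (fujimotoRow_succ t q)

theorem fujimotoM_eq_submatrix (t : ℕ) :
    fujimotoM t = (coeffMatrix (fujimotoRow t (t - 1))).submatrix Fin.val Fin.val := by
  ext i j
  simp only [fujimotoM, submatrix_apply, coeffMatrix, of_apply, fujimotoRow]
  split_ifs with hi hij
  · rw [min_eq_right (by omega : (i : ℕ) ≤ t - 1)]
    simp [coeff_one_add_X_pow]
  · simp [coeff_X_pow_mul', coeff_one_add_X_pow, hij]
  · simp [coeff_X_pow_mul', hij]

theorem fujimotoM_totallyNonneg_general (t : ℕ)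
    (s : ℕ)
    (r : Fin s → Fin (2 * t)) (c : Fin s → Fin (2 * t))
    (hr : StrictMono r) (hc : StrictMono c) :
    0 ≤ Matrix.det (fun k l => fujimotoM t (r k) (c l)) := by
  rw [fujimotoM_eq_submatrix]
  exact (totallyNonneg_fujimotoRow t (t - 1)).submatrix Fin.val_strictMono Fin.val_strictMono
    s r c hr hc

/-- For every positive integer `t`, the matrix `𝖬` is totally nonnegative:
every minor (determinant of the square submatrix obtained by selecting rows
`i_1 < ⋯ < i_s` and columns `j_1 < ⋯ < j_s`) is nonnegative. -/
theorem fujimotoM_totallyNonneg (t : ℕ) (ht : 1 ≤ t)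
    (s : ℕ) (hs : 1 ≤ s)
    (r : Fin s → Fin (2 * t)) (c : Fin s → Fin (2 * t))
    (hr : StrictMono r) (hc : StrictMono c) :
    0 ≤ Matrix.det (fun k l => fujimotoM t (r k) (c l)) :=
  fujimotoM_totallyNonneg_general t s r c hr hc
end

section
/- For every positive integer t and every s ≥ t, and all strictly increasing sequences of row indices i_1 < ⋯ < i_s and column indices j_1 < ⋯ < j_s in {1, …, 2t} such that the column index set {j_1, …, j_s} contains all of t+1, t+2, …, 2t, the determinant of the s × s submatrix (𝖬_{i_k, j_l})_{1 ≤ k, l ≤ s} is strictly positive. -/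
open Finset Function

section LatticePaths

variable {s : ℕ}

/-- The number of lattice paths of `N` steps, each raising the height by `0` or `1`,
from height `a` to height `c`. -/
def pathCount (N a c : ℕ) : ℤ := if a ≤ c then (N.choose (c - a) : ℤ) else 0

lemma pathCount_zero (a c : ℕ) : pathCount 0 a c = if a = c then 1 else 0 := by
  unfold pathCount
  rcases lt_trichotomy a c with h | rfl | h
  · rw [if_pos h.le, if_neg h.ne, Nat.choose_eq_zero_of_lt (by omega), Nat.cast_zero]
  · simp
  · rw [if_neg (by omega), if_neg h.ne']

lemma pathCount_succ (N a c : ℕ) :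
    pathCount (N + 1) a c = pathCount N a c + pathCount N (a + 1) c := by
  unfold pathCount
  rcases lt_trichotomy a c with h | rfl | h
  · rw [if_pos h.le, if_pos h.le, if_pos (show a + 1 ≤ c by omega),
      show c - a = c - (a + 1) + 1 by omega, Nat.choose_succ_succ', Nat.cast_add, add_comm]
  · simp
  · rw [if_neg (by omega), if_neg (by omega), if_neg (by omega), add_zero]

def pathMatrix (N a c : Fin s → ℕ) : Matrix (Fin s) (Fin s) ℤ :=
  Matrix.of fun k l => pathCount (N k) (a k) (c l)

lemma det_pathMatrix_zero {a c : Fin s → ℕ} (ha : StrictMono a) (hc : StrictMono c) :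
    (pathMatrix 0 a c).det = if a = c then 1 else 0 := by
  split_ifs with hac
  · subst hac
    rw [← Matrix.det_one (n := Fin s) (R := ℤ)]
    congr 1
    ext k l
    simp [pathMatrix, pathCount_zero, Matrix.one_apply, hc.injective.eq_iff]
  · obtain ⟨k, hk⟩ : ∃ k, ∀ l, a k ≠ c l := by
      by_contra! h
      choose σ hσ using h
      have hσ_mono : StrictMono σ := fun k l hkl =>
        hc.lt_iff_lt.mp (by rw [← hσ, ← hσ]; exact ha hkl)
      exact hac (funext fun k => by rw [hσ, hσ_mono.eq_id, id])
    exact Matrix.det_eq_zero_of_row_eq_zero k fun l => by simp [pathMatrix, pathCount_zero, hk l]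

lemma det_pathMatrix_eq_zero {N a c : Fin s → ℕ} {k l : Fin s} (hkl : k ≠ l) (hN : N k = N l)
    (ha : a k = a l) : (pathMatrix N a c).det = 0 :=
  Matrix.det_zero_of_row_eq hkl (by ext; simp [pathMatrix, hN, ha])

lemma det_pathMatrix_zero_nonneg {a c : Fin s → ℕ} (ha : Monotone a) (hc : StrictMono c) :
    0 ≤ (pathMatrix 0 a c).det := by
  by_cases ha' : Injective a
  · rw [det_pathMatrix_zero (ha.strictMono_of_injective ha') hc]
    split_ifs <;> norm_num
  · obtain ⟨k, l, hkl, hne⟩ : ∃ k l, a k = a l ∧ k ≠ l := by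
      simpa [Injective] using ha'
    exact (det_pathMatrix_eq_zero hne rfl hkl).ge

lemma det_pathMatrix_of_eq_succ (N a c : Fin s → ℕ) {j : Fin s} {m : ℕ} (hj : N j = m + 1) :
    (pathMatrix N a c).det = (pathMatrix (update N j m) a c).det +
      (pathMatrix (update N j m) (update a j (a j + 1)) c).det := by
  set M := pathMatrix (update N j m) a c
  have hrow : pathMatrix N a c =
      M.updateRow j (M j + pathMatrix (update N j m) (update a j (a j + 1)) c j) := by
    ext k l
    rcases eq_or_ne k j with rfl | hk
    · simp [M, pathMatrix, hj, pathCount_succ]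
    · simp [M, pathMatrix, hk]
  rw [hrow, Matrix.det_updateRow_add, Matrix.updateRow_eq_self]
  congr 2
  ext k l
  rcases eq_or_ne k j with rfl | hk
  · simp
  · simp [M, pathMatrix, hk]

lemma exists_first_max_of_sum_eq_succ {N : Fin s → ℕ} {n : ℕ} (hn : ∑ k, N k = n + 1) :
    ∃ j m, N j = m + 1 ∧ (∀ l, N l ≤ N j) ∧ (∀ k < j, N k < N j) ∧ ∑ k, update N j m k = n := by
  have : NeZero s := ⟨by rintro rfl; simp at hn⟩
  obtain ⟨i, -, hi⟩ := exists_max_image univ N univ_nonempty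
  let j := (univ.filter fun k => N k = N i).min' ⟨i, by simp⟩
  have hj : N j = N i := (mem_filter.mp (min'_mem (univ.filter fun k => N k = N i) _)).2
  have hmax : ∀ l, N l ≤ N j := fun l => hj ▸ hi l (mem_univ l)
  obtain ⟨m, hm⟩ : ∃ m, N j = m + 1 := Nat.exists_eq_succ_of_ne_zero fun h0 => by
    simp [show N = 0 from funext fun l => by simpa [h0] using hmax l] at hn
  refine ⟨j, m, hm, hmax, fun k hk => ?_, ?_⟩
  · exact lt_of_le_of_ne (hmax k) fun hk' => hk.not_ge (min'_le _ k (by simp [hk', hj]))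
  · have := add_sum_erase univ N (mem_univ j)
    rw [sum_update_of_mem (mem_univ j), sdiff_singleton_eq_erase]
    omega

/-- The starting point of the `l`-th path lies weakly above every point the `k`-th path can reach
at the same time, for `k < l`: the paths start `N k` steps before a common end time. -/
def StartsOrdered (N a : Fin s → ℕ) : Prop :=
  ∀ ⦃k l⦄, k < l → a k + (N k - N l) ≤ a l

namespace StartsOrdered

variable {N a : Fin s → ℕ} {j : Fin s} {m : ℕ}

lemma update_of_lt (h : StartsOrdered N a) (hj : N j = m + 1) (hfirst : ∀ k < j, N k < N j) :
    StartsOrdered (update N j m) a := by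
  intro k l hkl
  have := h hkl
  rcases eq_or_ne k j with rfl | hk
  · simp only [update_self, update_of_ne hkl.ne']; omega
  rcases eq_or_ne l j with rfl | hl
  · have := hfirst k hkl; simp only [update_self, update_of_ne hk]; omega
  · simpa only [update_of_ne hk, update_of_ne hl]

lemma update_succ (h : StartsOrdered N a) (hj : N j = m + 1) (hmax : ∀ l, N l ≤ N j)
    (hfirst : ∀ k < j, N k < N j) (hstrict : ∀ l, j < l → N l = N j → a j < a l) :
    StartsOrdered (update N j m) (update a j (a j + 1)) := by
  intro k l hkl
  have := h hkl
  rcases eq_or_ne k j with rfl | hk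
  · have := hmax l
    have : N l = N k → a k < a l := hstrict l hkl
    simp only [update_self, update_of_ne hkl.ne']; omega
  rcases eq_or_ne l j with rfl | hl
  · have := hfirst k hkl; simp only [update_self, update_of_ne hk]; omega
  · simpa only [update_of_ne hk, update_of_ne hl]

end StartsOrdered

theorem det_pathMatrix_nonneg {N a c : Fin s → ℕ} (hord : StartsOrdered N a)
    (hc : StrictMono c) : 0 ≤ (pathMatrix N a c).det := by
  obtain ⟨n, hn⟩ : ∃ n, ∑ k, N k = n := ⟨_, rfl⟩
  induction n generalizing N a with
  | zero =>
    obtain rfl : N = 0 := funext fun k => sum_eq_zero_iff.mp hn k (mem_univ k)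
    exact det_pathMatrix_zero_nonneg
      (monotone_iff_forall_lt.mpr fun k l hkl => by simpa using hord hkl) hc
  | succ n ih =>
    by_cases hrep : ∃ k l, k < l ∧ N k = N l ∧ a k = a l
    · obtain ⟨k, l, hkl, hN, ha⟩ := hrep
      exact (det_pathMatrix_eq_zero hkl.ne hN ha).ge
    push Not at hrep
    obtain ⟨j, m, hm, hmax, hfirst, hsum⟩ := exists_first_max_of_sum_eq_succ hn
    have hstrict : ∀ l, j < l → N l = N j → a j < a l := fun l hjl hl =>
      lt_of_le_of_ne (by simpa [hl] using hord hjl) (hrep j l hjl hl.symm)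
    rw [det_pathMatrix_of_eq_succ N a c hm]
    exact add_nonneg (ih (hord.update_of_lt hm hfirst) hsum)
      (ih (hord.update_succ hm hmax hfirst hstrict) hsum)

/-- `Q k d` is the height of the `k`-th path `d` steps before its end; all paths end at the
same time. -/
structure IsNonIntersectingPaths (N a c : Fin s → ℕ) (Q : Fin s → ℕ → ℕ) : Prop where
  start : ∀ k, Q k (N k) = a k
  finish : ∀ k, Q k 0 = c k
  step : ∀ k d, d < N k → Q k (d + 1) = Q k d ∨ Q k (d + 1) + 1 = Q k d
  lt : ∀ ⦃k l⦄, k < l → ∀ d, d ≤ N k → d ≤ N l → Q k d < Q l d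

namespace IsNonIntersectingPaths

variable {N a c : Fin s → ℕ} {Q : Fin s → ℕ → ℕ}

lemma strictMono_finish (hQ : IsNonIntersectingPaths N a c Q) : StrictMono c := fun k l hkl => by
  simpa only [hQ.finish] using hQ.lt hkl 0 (Nat.zero_le _) (Nat.zero_le _)

lemma start_lt_of_eq (hQ : IsNonIntersectingPaths N a c Q) {k l : Fin s} (hkl : k < l)
    (hN : N k = N l) : a k < a l := by
  have := hQ.lt hkl (N k) le_rfl hN.le
  rwa [hQ.start, hN, hQ.start] at this

lemma drop_first_step (hQ : IsNonIntersectingPaths N a c Q) {j : Fin s} {m : ℕ}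
    (hj : N j = m + 1) : IsNonIntersectingPaths (update N j m) (update a j (Q j m)) c Q := by
  have hle : update N j m ≤ N := update_le_iff.mpr ⟨by omega, fun _ _ => le_rfl⟩
  refine ⟨fun k => ?_, hQ.finish, fun k d hd => hQ.step k d (hd.trans_le (hle k)),
    fun k l hkl d hk hl => hQ.lt hkl d (hk.trans (hle k)) (hl.trans (hle l))⟩
  rcases eq_or_ne k j with rfl | hk
  · simp
  · simp [hk, hQ.start]

end IsNonIntersectingPaths

theorem det_pathMatrix_pos {N a c : Fin s → ℕ} {Q : Fin s → ℕ → ℕ} (hord : StartsOrdered N a)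
    (hQ : IsNonIntersectingPaths N a c Q) : 0 < (pathMatrix N a c).det := by
  have hc := hQ.strictMono_finish
  obtain ⟨n, hn⟩ : ∃ n, ∑ k, N k = n := ⟨_, rfl⟩
  induction n generalizing N a with
  | zero =>
    obtain rfl : N = 0 := funext fun k => sum_eq_zero_iff.mp hn k (mem_univ k)
    obtain rfl : a = c := funext fun k => by rw [← hQ.start k, ← hQ.finish k]; rfl
    simp [det_pathMatrix_zero hc hc]
  | succ n ih =>
    obtain ⟨j, m, hm, hmax, hfirst, hsum⟩ := exists_first_max_of_sum_eq_succ hn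
    have hord₁ := hord.update_of_lt hm hfirst
    have hord₂ := hord.update_succ hm hmax hfirst fun l hjl hl => hQ.start_lt_of_eq hjl hl.symm
    have hQ' := hQ.drop_first_step hm
    rw [det_pathMatrix_of_eq_succ N a c hm]
    -- the first step of path `j` is flat or rising: the shortened family certifies that summand
    have hstep := hQ.step j m (by omega)
    rw [← hm, hQ.start] at hstep
    rcases hstep with hflat | hrise
    · rw [← hflat, update_eq_self] at hQ'
      exact add_pos_of_pos_of_nonneg (ih hord₁ hQ' hsum) (det_pathMatrix_nonneg hord₂ hc)
    · rw [← hrise] at hQ'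
      exact add_pos_of_nonneg_of_pos (det_pathMatrix_nonneg hord₁ hc) (ih hord₂ hQ' hsum)

lemma Fin.le_apply_of_strictMono {f : Fin s → ℕ} (hf : StrictMono f) (k : Fin s) :
    (k : ℕ) ≤ f k := by
  simpa using card_le_card_of_injOn f (s := Iio k) (t := Iio (f k))
    (fun i hi => by simpa using hf (mem_Iio.mp hi)) hf.injective.injOn

lemma Fin.apply_add_le_of_strictMono {f : Fin s → ℕ} (hf : StrictMono f) {n : ℕ}
    (hn : ∀ i, f i < n) (k : Fin s) : f k + s ≤ n + k := by
  have := card_le_card_of_injOn f (s := Ioi k) (t := Ioo (f k) n)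
    (fun i hi => by simpa using ⟨hf (mem_Ioi.mp hi), hn i⟩) hf.injective.injOn
  have hk := hn k
  simp only [Fin.card_Ioi, Nat.card_Ioo] at this
  omega

lemma le_apply_of_Ico_subset_range {f : Fin s → ℕ} (hf : Monotone f) {v n : ℕ}
    (h : Set.Ico v n ⊆ Set.range f) (k : Fin s) (hk : v + s ≤ n + k) : v ≤ f k := by
  by_contra! hfk
  have hsub : Ico v n ⊆ (Ioi k).image f := fun w hw => by
    obtain ⟨l, rfl⟩ := h (by simpa using hw)
    have : k < l := lt_of_not_ge fun hlk => by have := hf hlk; simp at hw; omega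
    exact mem_image_of_mem f (mem_Ioi.mpr this)
  have := (card_le_card hsub).trans card_image_le
  simp only [Nat.card_Ico, Fin.card_Ioi] at this
  omega

section GreedyPaths

variable {N a c : Fin s → ℕ}

/-- The number of paths below the `k`-th one that are already under way `d` steps before the
common end. -/
def activeBelow (N : Fin s → ℕ) (k : Fin s) (d : ℕ) : ℕ := #{j | j < k ∧ d ≤ N j}

lemma activeBelow_le (k : Fin s) (d : ℕ) : activeBelow N k d ≤ k :=
  (card_le_card (t := Iio k) fun _ hj => mem_Iio.mpr (mem_filter.mp hj).2.1).trans
    (Fin.card_Iio k).le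

lemma activeBelow_zero (k : Fin s) : activeBelow N k 0 = k := by
  simp [activeBelow, filter_gt_eq_Iio]

lemma activeBelow_succ_le (k : Fin s) (d : ℕ) : activeBelow N k (d + 1) ≤ activeBelow N k d :=
  card_le_card fun j => by simp +contextual [Nat.le_of_succ_le]

lemma activeBelow_le_succ_add_one (hN : Injective N) (k : Fin s) (d : ℕ) :
    activeBelow N k d ≤ activeBelow N k (d + 1) + 1 := by
  have hsub : ({j | j < k ∧ d ≤ N j} : Finset _) ⊆
      ({j | j < k ∧ d + 1 ≤ N j} : Finset _) ∪ ({j | N j = d} : Finset _) :=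
    fun j => by simp only [mem_filter, mem_union, mem_univ, true_and]; omega
  have hone : #({j | N j = d} : Finset _) ≤ 1 :=
    card_le_one.mpr fun i hi j hj => hN (by simp_all)
  exact (card_le_card hsub).trans ((card_union_le _ _).trans (by unfold activeBelow; omega))

lemma activeBelow_lt {k l : Fin s} (hkl : k < l) {d : ℕ} (hd : d ≤ N k) :
    activeBelow N k d < activeBelow N l d :=
  card_lt_card <| (ssubset_iff_of_subset fun j hj => by
    simp only [mem_filter, mem_univ, true_and] at hj ⊢; exact ⟨hj.1.trans hkl, hj.2⟩).mpr
    ⟨k, by simp [hkl, hd], by simp⟩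

lemma activeBelow_eq_zero {k : Fin s} (hk : ∀ j < k, N j < N k) : activeBelow N k (N k) = 0 :=
  card_eq_zero.mpr (filter_eq_empty_iff.mpr fun j _ h => (hk j h.1).not_ge h.2)

/-- Each path runs as low as its start, its end and the paths below it allow. -/
def greedyPaths (N a c : Fin s → ℕ) (k : Fin s) (d : ℕ) : ℕ :=
  max (a k) (max (c k - d) (activeBelow N k d))

theorem isNonIntersectingPaths_greedyPaths (hN : Injective N) (hc : StrictMono c)
    (hac : ∀ k, a k ≤ c k) (hca : ∀ k, c k ≤ a k + N k)
    (hstart : ∀ k, (∀ j < k, N j < N k) ∨ (k : ℕ) ≤ a k)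
    (ha : ∀ ⦃k l⦄, k < l → a k = 0 ∨ a k < a l) :
    IsNonIntersectingPaths N a c (greedyPaths N a c) where
  start k := by
    have : activeBelow N k (N k) ≤ a k := by
      rcases hstart k with h | h
      · simp [activeBelow_eq_zero h]
      · exact (activeBelow_le k _).trans h
    have := hca k
    simp only [greedyPaths]; omega
  finish k := by
    have := hac k
    have := Fin.le_apply_of_strictMono hc k
    simp only [greedyPaths, activeBelow_zero]; omega
  step k d _ := by
    have := activeBelow_succ_le (N := N) k d
    have := activeBelow_le_succ_add_one hN k d
    simp only [greedyPaths]; omega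
  lt k l hkl d hk _ := by
    have := activeBelow_lt hkl hk
    have := hc hkl
    have := ha hkl
    simp only [greedyPaths]; omega

end GreedyPaths

end LatticePaths

section Fujimoto

variable {t : ℕ}

def rowSteps (t i : ℕ) : ℕ := if i < t then t + i else 2 * t - i - 1

def rowHeight (t i : ℕ) : ℕ := if i < t then 0 else i

lemma fujimotoM_eq_pathCount (i j : Fin (2 * t)) :
    fujimotoM t i j = pathCount (rowSteps t i) (rowHeight t i) j := by
  unfold fujimotoM pathCount rowSteps rowHeight
  split_ifs <;> simp_all

lemma rowSteps_injOn : Set.InjOn (rowSteps t) (Set.Iio (2 * t)) := fun i hi i' hi' h => by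
  simp only [Set.mem_Iio] at hi hi'
  unfold rowSteps at h
  split_ifs at h <;> omega

variable {r c : Fin s → Fin (2 * t)}

lemma startsOrdered_rowSteps (hr : StrictMono r) :
    StartsOrdered (fun k => rowSteps t (r k)) (fun k => rowHeight t (r k)) := fun k l hkl => by
  have : (r k : ℕ) < r l := hr hkl
  have := (r l).isLt
  simp only [rowSteps, rowHeight]
  split_ifs <;> omega

lemma isNonIntersectingPaths_rowSteps (hs : t ≤ s) (hr : StrictMono r) (hc : StrictMono c)
    (hcol : ∀ j : Fin (2 * t), t ≤ j.val → j ∈ Set.range c) :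
    IsNonIntersectingPaths (fun k => rowSteps t (r k)) (fun k => rowHeight t (r k))
      (fun l => c l) (greedyPaths (fun k => rowSteps t (r k)) (fun k => rowHeight t (r k))
        (fun l => c l)) := by
  have hr' : StrictMono fun k => (r k : ℕ) := Fin.val_strictMono.comp hr
  have hc' : StrictMono fun l => (c l : ℕ) := Fin.val_strictMono.comp hc
  have hcol' : Set.Ico t (2 * t) ⊆ Set.range fun l => (c l : ℕ) := fun j hj => by
    obtain ⟨l, hl⟩ := hcol ⟨j, hj.2⟩ hj.1
    exact ⟨l, by simp [hl]⟩
  have hk_le_r := Fin.le_apply_of_strictMono hr'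
  have hr_le := Fin.apply_add_le_of_strictMono hr' fun k => (r k).isLt
  have hc_le := Fin.apply_add_le_of_strictMono hc' fun k => (c k).isLt
  refine isNonIntersectingPaths_greedyPaths ?inj hc' (fun k => ?start_le_end)
    (fun k => ?end_le) (fun k => ?first) (fun k l hkl => ?ordered)
  case inj => exact fun k l h => hr'.injective (rowSteps_injOn (r k).isLt (r l).isLt h)
  case start_le_end =>
    unfold rowHeight
    split_ifs with h
    · exact Nat.zero_le _
    · exact le_apply_of_Ico_subset_range hc'.monotone
        ((Set.Ico_subset_Ico_left (not_lt.mp h)).trans hcol') k (hr_le k)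
  case end_le =>
    have := hc_le k
    have := hk_le_r k
    have := (c k).isLt
    simp only [rowSteps, rowHeight]
    split_ifs <;> omega
  case first =>
    by_cases h : (r k : ℕ) < t
    · refine Or.inl fun j hj => ?_
      have : (r j : ℕ) < r k := hr hj
      simp only [rowSteps, h, if_true, show (r j : ℕ) < t by omega]
      omega
    · exact Or.inr (by simpa [rowHeight, h] using hk_le_r k)
  case ordered =>
    have : (r k : ℕ) < r l := hr hkl
    simp only [rowHeight]
    split_ifs <;> omega

end Fujimoto

theorem fujimotoM_minor_pos_general (t : ℕ)
    (s : ℕ) (hs : t ≤ s)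
    (r : Fin s → Fin (2 * t)) (c : Fin s → Fin (2 * t))
    (hr : StrictMono r) (hc : StrictMono c)
    (hcol : ∀ j : Fin (2 * t), t ≤ j.val → j ∈ Set.range c) :
    0 < Matrix.det (fun k l => fujimotoM t (r k) (c l)) := by
  have hM : (fun k l => fujimotoM t (r k) (c l)) =
      pathMatrix (fun k => rowSteps t (r k)) (fun k => rowHeight t (r k)) (fun l => c l) := by
    ext k l
    simp [pathMatrix, fujimotoM_eq_pathCount]
  rw [hM]
  exact det_pathMatrix_pos (startsOrdered_rowSteps hr)
    (isNonIntersectingPaths_rowSteps hs hr hc hcol)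

/-- For every positive integer `t`, every `s ≥ t`, and all strictly increasing
row indices `i_1 < ⋯ < i_s` and column indices `j_1 < ⋯ < j_s` in `{1, …, 2t}`
such that the column index set contains all of `t+1, …, 2t`, the corresponding
`s × s` minor of `𝖬` is strictly positive. -/
theorem fujimotoM_minor_pos (t : ℕ) (ht : 1 ≤ t)
    (s : ℕ) (hs : t ≤ s)
    (r : Fin s → Fin (2 * t)) (c : Fin s → Fin (2 * t))
    (hr : StrictMono r) (hc : StrictMono c)
    (hcol : ∀ j : Fin (2 * t), t ≤ j.val → j ∈ Set.range c) :
    0 < Matrix.det (fun k l => fujimotoM t (r k) (c l)) :=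
  fujimotoM_minor_pos_general t s hs r c hr hc hcol
end

section
/- For every positive integer t, det M1 = det M2 = det M3 = 1. -/
/-- `M1 = (C(t+i−1, j−1))_{1≤i,j≤t}` in 0-based indices. -/
def fujimotoM1 (t : ℕ) : Matrix (Fin t) (Fin t) ℤ :=
  fun i j => ((t + i.val).choose j.val : ℤ)

/-- `M2 = (C(t+i−1, t+j−1))_{1≤i,j≤t}` in 0-based indices. -/
def fujimotoM2 (t : ℕ) : Matrix (Fin t) (Fin t) ℤ :=
  fun i j => ((t + i.val).choose (t + j.val) : ℤ)

/-- `M3 = (C(t−i, j−i))_{1≤i,j≤t}` in 0-based indices, with `C(n, k) = 0` for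
`k < 0`. -/
def fujimotoM3 (t : ℕ) : Matrix (Fin t) (Fin t) ℤ :=
  fun i j => if i.val ≤ j.val then ((t - 1 - i.val).choose (j.val - i.val) : ℤ) else 0

def fujA (t : ℕ) : Matrix (Fin t) (Fin t) ℤ :=
  fun i k => ((i.val).choose k.val : ℤ)

def fujB (t : ℕ) : Matrix (Fin t) (Fin t) ℤ :=
  fun k j => if k.val ≤ j.val then (t.choose (j.val - k.val) : ℤ) else 0

lemma fujA_det (t : ℕ) : (fujA t).det = 1 := by
  rw [Matrix.det_of_lowerTriangular (fujA t)
    (by intro i j h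
        have : i.val < j.val := h
        simp [fujA, Nat.choose_eq_zero_of_lt this])]
  simp [fujA]

lemma fujB_det (t : ℕ) : (fujB t).det = 1 := by
  rw [Matrix.det_of_upperTriangular
    (by intro i j h
        have : ¬ i.val ≤ j.val := Nat.not_le.mpr h
        simp [fujB, this] : (fujB t).BlockTriangular id)]
  simp [fujB]

lemma fujM1_eq (t : ℕ) : fujimotoM1 t = fujA t * fujB t := by
  ext i j
  simp only [Matrix.mul_apply, fujimotoM1, fujA, fujB]
  have key : ((t + i.val).choose j.val : ℤ)
      = ∑ k ∈ Finset.range (j.val + 1), ((i.val).choose k * t.choose (j.val - k) : ℤ) := by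
    rw [add_comm t i.val]
    rw_mod_cast [Nat.add_choose_eq, Finset.Nat.sum_antidiagonal_eq_sum_range_succ_mk]
  have h1 : (∑ k : Fin t, ((i.val).choose k.val : ℤ) *
        (if k.val ≤ j.val then (t.choose (j.val - k.val) : ℤ) else 0))
      = ∑ k ∈ Finset.range t, ((i.val).choose k : ℤ) *
        (if k ≤ j.val then (t.choose (j.val - k) : ℤ) else 0) :=
    Fin.sum_univ_eq_sum_range (fun k => ((i.val).choose k : ℤ) *
      (if k ≤ j.val then (t.choose (j.val - k) : ℤ) else 0)) t
  have h2 : (∑ k ∈ Finset.range (j.val + 1), ((i.val).choose k : ℤ) *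
        (if k ≤ j.val then (t.choose (j.val - k) : ℤ) else 0))
      = ∑ k ∈ Finset.range t, ((i.val).choose k : ℤ) *
        (if k ≤ j.val then (t.choose (j.val - k) : ℤ) else 0) := by
    refine Finset.sum_subset (Finset.range_subset_range.mpr j.isLt) (fun k _ hk => ?_)
    simp only [Finset.mem_range] at hk
    rw [if_neg (by omega), mul_zero]
  rw [key, h1, ← h2]
  refine Finset.sum_congr rfl fun k hk => ?_
  simp only [Finset.mem_range, Nat.lt_succ_iff] at hk
  rw [if_pos hk]

/-- For every positive integer `t`, `det M1 = det M2 = det M3 = 1`. -/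
theorem fujimotoM1_M2_M3_det (t : ℕ) (ht : 1 ≤ t) :
    (fujimotoM1 t).det = 1 ∧ (fujimotoM2 t).det = 1 ∧ (fujimotoM3 t).det = 1 := by
  refine ⟨?_, ?_, ?_⟩
  · rw [fujM1_eq, Matrix.det_mul, fujA_det, fujB_det]; ring
  · rw [Matrix.det_of_lowerTriangular (fujimotoM2 t)
      (by intro i j h
          have : i.val < j.val := h
          have h2 : t + i.val < t + j.val := by omega
          simp [fujimotoM2, Nat.choose_eq_zero_of_lt h2])]
    simp [fujimotoM2]
  · rw [Matrix.det_of_upperTriangular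
      (by intro i j h
          have : ¬ i.val ≤ j.val := Nat.not_le.mpr h
          simp [fujimotoM3, this] : (fujimotoM3 t).BlockTriangular id)]
    simp [fujimotoM3]
end

section
/- For all natural numbers c ≥ 0 and n ≥ 1, the n × n integer matrix with (i, j)-entry C(c+i−1, j−1), for 1 ≤ i, j ≤ n, has determinant 1. -/
open Finset

lemma nat_sum_choose (c n i j : ℕ) (hi : i < n) (hj : j < n) :
    ∑ k ∈ range n, i.choose k * (if k ≤ j then c.choose (j - k) else 0)
      = (c + i).choose j := by
  rw [add_comm c i, Nat.add_choose_eq, Finset.Nat.sum_antidiagonal_eq_sum_range_succ_mk]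
  rw [← Finset.sum_subset (Finset.range_subset_range.2 hj)]
  · apply Finset.sum_congr rfl
    intro k hk
    rw [if_pos (Nat.lt_succ_iff.mp (Finset.mem_range.mp hk))]
  · intro k _ hk
    have : ¬ k ≤ j := fun h => hk (Finset.mem_range.mpr (Nat.lt_succ_of_le h))
    rw [if_neg this, mul_zero]

/-- For all natural numbers `c ≥ 0` and `n ≥ 1`, the `n × n` integer matrix
with `(i, j)`-entry `C(c+i−1, j−1)` for `1 ≤ i, j ≤ n` (in 0-based indices,
`C(c+i, j)`) has determinant `1`. -/
theorem det_shifted_binomial_matrix (c n : ℕ) (hn : 1 ≤ n) :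
    Matrix.det (fun i j : Fin n => ((c + i.val).choose j.val : ℤ)) = 1 := by
  set L : Matrix (Fin n) (Fin n) ℤ := fun i k => (i.val.choose k.val : ℤ)
  set U : Matrix (Fin n) (Fin n) ℤ :=
    fun k j => if (k : ℕ) ≤ j then (c.choose (j.val - k.val) : ℤ) else 0
  have hM : (fun i j : Fin n => ((c + i.val).choose j.val : ℤ)) = L * U := by
    ext i j
    rw [Matrix.mul_apply]
    have h1 := nat_sum_choose c n i j i.isLt j.isLt
    have h2 : ((∑ k ∈ range n, i.val.choose k * (if k ≤ j.val then c.choose (j.val - k) else 0) : ℕ) : ℤ)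
        = ((c + i.val).choose j.val : ℤ) := by exact_mod_cast congrArg (Nat.cast : ℕ → ℤ) h1
    rw [← h2, Nat.cast_sum, Finset.sum_range fun k => _]
    apply Finset.sum_congr rfl
    intro k _
    simp [L, U, apply_ite (Nat.cast : ℕ → ℤ)]
  rw [hM, Matrix.det_mul]
  have hL : L.det = 1 := by
    rw [Matrix.det_of_lowerTriangular L (fun i j h => by
      simp only [L]
      have : (i : ℕ) < j := h
      rw [Nat.choose_eq_zero_of_lt this, Nat.cast_zero])]
    simp [L]
  have hU : U.det = 1 := by
    rw [Matrix.det_of_upperTriangular (M := U) (fun i j h => by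
      have : ¬ (i : ℕ) ≤ j := not_le.mpr h
      simp only [U]; rw [if_neg this])]
    simp [U]
  rw [hL, hU, mul_one]
end

section
/- Define w : ℕ × ℕ × ℕ → ℕ recursively by w(a, 0, k) = (k)_a and, for b ≥ 1, w(a, b, k) = ∑_{s=0}^{a} (k + a + 2b − s)_s · w(a − s, b − 1, k). Then for all natural numbers a, b, k one has w(a, b, k) = C(a+b, a) · (k+b)_a. -/
/-- The rising factorial (Pochhammer symbol) `(x)_s = x(x+1)⋯(x+s−1)`,
with `(x)_0 = 1`. -/
def risingFac (x s : ℕ) : ℕ := ∏ i ∈ Finset.range s, (x + i)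

/-- The lattice-path weight sums `w(a, b, k)`, defined recursively by
`w(a, 0, k) = (k)_a` and, for `b ≥ 1`,
`w(a, b, k) = ∑_{s=0}^{a} (k + a + 2b − s)_s · w(a − s, b − 1, k)`. -/
def latticeWeight : ℕ → ℕ → ℕ → ℕ
  | a, 0, k => risingFac k a
  | a, b + 1, k =>
      ∑ s ∈ Finset.range (a + 1),
        risingFac (k + a + 2 * (b + 1) - s) s * latticeWeight (a - s) b k

lemma risingFac_succ (x s : ℕ) : risingFac x (s+1) = risingFac x s * (x + s) :=
  Finset.prod_range_succ _ _

lemma risingFac_succ' (x s : ℕ) : risingFac x (s+1) = x * risingFac (x+1) s := by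
  rw [risingFac, Finset.prod_range_succ']
  simp [risingFac, mul_comm, add_assoc, add_comm 1]

lemma latticeWeight_rec (a b k : ℕ) :
    latticeWeight (a+1) (b+1) k
      = latticeWeight (a+1) b k + (k + a + 2*(b+1)) * latticeWeight a (b+1) k := by
  show (∑ s ∈ Finset.range (a+1+1),
      risingFac (k + (a+1) + 2 * (b + 1) - s) s * latticeWeight (a+1-s) b k) = _
  rw [Finset.sum_range_succ']
  have h1 : ∀ s ∈ Finset.range (a+1),
      risingFac (k + (a+1) + 2 * (b + 1) - (s+1)) (s+1) * latticeWeight (a+1-(s+1)) b k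
      = (k + a + 2*(b+1)) * (risingFac (k + a + 2 * (b + 1) - s) s * latticeWeight (a-s) b k) := by
    intro s hs
    simp only [Finset.mem_range] at hs
    have e1 : k + (a+1) + 2 * (b + 1) - (s+1) = k + a + 2*(b+1) - s := by omega
    have e2 : k + a + 2*(b+1) - s + s = k + a + 2*(b+1) := by omega
    rw [risingFac_succ, e1, e2]
    have e3 : a + 1 - (s+1) = a - s := by omega
    rw [e3]; ring
  rw [Finset.sum_congr rfl h1, ← Finset.mul_sum]
  show _ + risingFac _ 0 * latticeWeight (a+1-0) b k = _
  simp only [risingFac, Finset.range_zero, Finset.prod_empty, one_mul, Nat.sub_zero]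
  rw [show latticeWeight a (b+1) k = ∑ s ∈ Finset.range (a + 1),
        risingFac (k + a + 2 * (b + 1) - s) s * latticeWeight (a - s) b k from rfl]
  exact add_comm _ _

/-- **Lemma 3.2.** For all natural numbers `a, b, k`,
`w(a, b, k) = C(a+b, a) · (k+b)_a`. -/
theorem latticeWeight_eq (a b k : ℕ) :
    latticeWeight a b k = (a + b).choose a * risingFac (k + b) a := by
  induction b generalizing a with
  | zero => simp [latticeWeight]
  | succ b ih =>
    induction a with
    | zero =>
      show (∑ s ∈ Finset.range 1, _) = _
      simp [latticeWeight, ih 0, risingFac]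
    | succ a iha =>
      rw [latticeWeight_rec, ih (a+1), iha]
      have h : (a+b+1).choose (a+1) * (a+1) = (a+b+1).choose a * (b+1) := by
        have := Nat.choose_succ_right_eq (a+b+1) a
        simpa [show a+b+1-a = b+1 from by omega] using this
      have hp : (a+1+(b+1)).choose (a+1) = (a+b+1).choose a + (a+b+1).choose (a+1) := by
        rw [show a+1+(b+1) = (a+b+1)+1 from by omega]
        exact Nat.choose_succ_succ _ _
      rw [hp, risingFac_succ' (k+b), risingFac_succ (k+(b+1)),
          show a+1+b = a+b+1 from by omega, show k+b+1 = k+(b+1) from rfl,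
          show a+(b+1) = a+b+1 from by omega]
      set X := (a+b+1).choose (a+1)
      set Y := (a+b+1).choose a
      set R := risingFac (k+(b+1)) a
      zify at h ⊢
      linear_combination (-(R:ℤ)) * h
end

section
/- Let n ≥ 1 and let l_1, l_2, …, l_n be pairwise distinct natural numbers. Then the n × n matrix with (r, s)-entry C(l_r, n−s), for 1 ≤ r, s ≤ n, has nonzero determinant. -/
open Polynomial Equiv

/-- For `n ≥ 1` and pairwise distinct natural numbers `l_1, …, l_n`, the
`n × n` matrix with `(r, s)`-entry `C(l_r, n−s)` (1-based `1 ≤ r, s ≤ n`;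
0-based entry `C(l_r, n−1−s)`) has nonzero determinant. -/
theorem det_binomial_vandermonde_ne_zero (n : ℕ) (hn : 1 ≤ n)
    (l : Fin n → ℕ) (hl : Function.Injective l) :
    Matrix.det (fun r s : Fin n => ((l r).choose (n - 1 - s.val) : ℤ)) ≠ 0 := by
  set C : Matrix (Fin n) (Fin n) ℤ :=
    Matrix.of (fun (i j : Fin n) => (Nat.choose (l i) (j : ℕ) : ℤ)) with hCdef
  have hC : C.det ≠ 0 := by
    have hv := Matrix.det_eval_matrixOfPolynomials_eq_det_vandermonde (fun i => (l i : ℤ))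
      (fun i => descPochhammer ℤ i) (fun i => descPochhammer_natDegree ℤ i)
      (fun i => monic_descPochhammer ℤ i)
    have hfac : (Matrix.of (fun (i j : Fin n) =>
        ((descPochhammer ℤ (j : ℕ)).eval (l i : ℤ)))).det =
        (∏ i : Fin n, ((Nat.factorial (i : ℕ)) : ℤ)) * C.det := by
      convert Matrix.det_mul_row (fun (i : Fin n) => ((Nat.factorial (i : ℕ)) : ℤ)) _
      rw [descPochhammer_eval_eq_descFactorial ℤ _ _]
      simp only [hCdef, Matrix.of_apply]
      exact_mod_cast Nat.descFactorial_eq_factorial_mul_choose _ _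
    have hvdm : (Matrix.vandermonde (fun i : Fin n => (l i : ℤ))).det ≠ 0 := by
      rw [Matrix.det_vandermonde_ne_zero_iff]
      intro a b hab
      simp only [Nat.cast_inj] at hab
      exact hl hab
    rw [hv, hfac] at hvdm
    exact fun h => hvdm (by rw [h, mul_zero])
  have hrev : (fun r s : Fin n => ((l r).choose (n - 1 - s.val) : ℤ)) =
      C.submatrix id (Fin.revPerm : Perm (Fin n)) := by
    ext r s
    simp [Matrix.submatrix, hCdef, Fin.rev]
    congr 1
    omega
  rw [hrev, Matrix.det_permute']
  simp only [ne_eq, mul_eq_zero, not_or]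
  exact ⟨by simp [Units.ne_zero], hC⟩
end

section
/- Let m = 2t be an even integer with t ≥ 2. Define the m polynomials over ℂ: h_{2l+1}(z) = z^l + z^{2t−l−1} and h_{2l+2}(z) = √(−1)·(z^l − z^{2t−l−1}) for 0 ≤ l ≤ t−2, together with h_{2t−1}(z) = √(−(t−1))·(z^{t−1} + z^t) and h_{2t}(z) = √(t−1)·(z^{t−1} − z^t). Then h_1, …, h_m are linearly independent over ℂ (hence form a basis of the space of polynomials of degree at most m−1), and moreover ∑_{k=1}^{m} h_k(z)^2 = 0 identically. -/
open Polynomial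

/-- The `m = 2t` Enneper–Weierstrass polynomials of the appendix, indexed by
`k : Fin (2*t)` (0-based; the paper's 1-based index is `k.val + 1`):
`h_{2l+1} = z^l + z^{2t−l−1}` and `h_{2l+2} = i (z^l − z^{2t−l−1})` for
`0 ≤ l ≤ t−2`, together with `h_{2t−1} = i√(t−1)·(z^{t−1} + z^t)` and
`h_{2t} = √(t−1)·(z^{t−1} − z^t)`. -/
noncomputable def weierstrassPoly (t : ℕ) (k : Fin (2 * t)) : Polynomial ℂ :=
  let l := k.val / 2
  if l + 1 < t then
    if k.val % 2 = 0 then X ^ l + X ^ (2 * t - l - 1)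
    else C Complex.I * (X ^ l - X ^ (2 * t - l - 1))
  else
    if k.val % 2 = 0 then
      C (Complex.I * (Real.sqrt ((t : ℝ) - 1) : ℂ)) * (X ^ (t - 1) + X ^ t)
    else
      C ((Real.sqrt ((t : ℝ) - 1) : ℂ)) * (X ^ (t - 1) - X ^ t)

/-! The polynomials come in pairs `α_l • (X^l + X^(2t-1-l))`, `β_l • (X^l - X^(2t-1-l))` for
`l < t`, with `α_l, β_l ≠ 0` and `α_l² + β_l² = 0`. Each pair spans `X^l` and `X^(2t-1-l)`, so
the `2t` polynomials span the `2t`-dimensional space of polynomials of degree `< 2t`. Squaring a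
pair, the pure powers cancel and only `2(α_l² - β_l²) X^(2t-1)` survives: this is `4 X^(2t-1)` for
each of the first `t - 1` pairs and `-4(t-1) X^(2t-1)` for the last one. -/

theorem Fin.sum_univ_two_mul {M : Type*} [AddCommMonoid M] {n : ℕ} (f : Fin (2 * n) → M) :
    ∑ k, f k = ∑ l : Fin n, (f ⟨2 * l, by omega⟩ + f ⟨2 * l + 1, by omega⟩) := by
  rw [← (finProdFinEquiv.trans (finCongr (Nat.mul_comm n 2))).sum_comp, Fintype.sum_prod_type]
  refine Finset.sum_congr rfl fun l _ => ?_
  rw [Fin.sum_univ_two]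
  congr 2 <;> ext <;> simp [add_comm]

theorem Submodule.mem_span_smul_add_smul_sub {K M : Type*} [Field K] [NeZero (2 : K)]
    [AddCommGroup M] [Module K M] {α β : K} (hα : α ≠ 0) (hβ : β ≠ 0) (x y : M) :
    x ∈ span K {α • (x + y), β • (x - y)} ∧ y ∈ span K {α • (x + y), β • (x - y)} := by
  simp only [mem_span_pair]
  have h2 : (2 : K) ≠ 0 := two_ne_zero
  exact ⟨⟨(2 * α)⁻¹, (2 * β)⁻¹, by match_scalars <;> field_simp <;> ring⟩,
    ⟨(2 * α)⁻¹, -(2 * β)⁻¹, by match_scalars <;> field_simp <;> ring⟩⟩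

noncomputable def weierstrassEvenCoeff (t l : ℕ) : ℂ :=
  if l + 1 < t then 1 else Complex.I * (√((t : ℝ) - 1) : ℂ)

noncomputable def weierstrassOddCoeff (t l : ℕ) : ℂ :=
  if l + 1 < t then Complex.I else (√((t : ℝ) - 1) : ℂ)

section
variable {t l : ℕ}

theorem weierstrassPoly_two_mul (hl : l < t) :
    weierstrassPoly t ⟨2 * l, by omega⟩ =
      weierstrassEvenCoeff t l • (X ^ l + X ^ (2 * t - l - 1)) := by
  have hdiv : 2 * l / 2 = l := by omega
  by_cases hlt : l + 1 < t
  · simp [weierstrassPoly, weierstrassEvenCoeff, hdiv, hlt]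
  · obtain rfl : l = t - 1 := by omega
    rw [show 2 * t - (t - 1) - 1 = t by omega, smul_eq_C_mul]
    simp [weierstrassPoly, weierstrassEvenCoeff, hdiv, hlt]

theorem weierstrassPoly_two_mul_add_one (hl : l < t) :
    weierstrassPoly t ⟨2 * l + 1, by omega⟩ =
      weierstrassOddCoeff t l • (X ^ l - X ^ (2 * t - l - 1)) := by
  have hdiv : (2 * l + 1) / 2 = l := by omega
  have hmod : (2 * l + 1) % 2 = 1 := by omega
  by_cases hlt : l + 1 < t
  · simp [weierstrassPoly, weierstrassOddCoeff, hdiv, hmod, hlt, smul_eq_C_mul]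
  · obtain rfl : l = t - 1 := by omega
    rw [show 2 * t - (t - 1) - 1 = t by omega]
    simp [weierstrassPoly, weierstrassOddCoeff, hdiv, hmod, hlt, smul_eq_C_mul]

theorem ofReal_sqrt_sub_one_sq (ht : 1 ≤ t) : (√((t : ℝ) - 1) : ℂ) ^ 2 = t - 1 := by
  rw [← Complex.ofReal_pow, Real.sq_sqrt (by simpa using ht)]
  push_cast; ring

theorem ofReal_sqrt_sub_one_ne_zero (ht : 2 ≤ t) : (√((t : ℝ) - 1) : ℂ) ≠ 0 := by
  have : (2 : ℝ) ≤ t := by exact_mod_cast ht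
  exact Complex.ofReal_ne_zero.2 (Real.sqrt_pos.2 (by linarith)).ne'

theorem weierstrassEvenCoeff_ne_zero (ht : 2 ≤ t) : weierstrassEvenCoeff t l ≠ 0 := by
  unfold weierstrassEvenCoeff
  split_ifs <;> simp [ofReal_sqrt_sub_one_ne_zero ht]

theorem weierstrassOddCoeff_ne_zero (ht : 2 ≤ t) : weierstrassOddCoeff t l ≠ 0 := by
  unfold weierstrassOddCoeff
  split_ifs <;> simp [ofReal_sqrt_sub_one_ne_zero ht]

theorem weierstrassCoeff_sq_add_sq (hl : l < t) :
    weierstrassEvenCoeff t l ^ 2 + weierstrassOddCoeff t l ^ 2 = 0 := by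
  unfold weierstrassEvenCoeff weierstrassOddCoeff
  split_ifs
  · simp
  · rw [mul_pow, Complex.I_sq, ofReal_sqrt_sub_one_sq (by omega)]; ring

theorem weierstrassCoeff_sq_sub_sq (hl : l < t) :
    weierstrassEvenCoeff t l ^ 2 - weierstrassOddCoeff t l ^ 2 =
      if l + 1 < t then 2 else -2 * ((t : ℂ) - 1) := by
  unfold weierstrassEvenCoeff weierstrassOddCoeff
  split_ifs
  · norm_num
  · rw [mul_pow, Complex.I_sq, ofReal_sqrt_sub_one_sq (by omega)]; ring

theorem sum_weierstrassCoeff_sq_sub_sq (t : ℕ) :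
    ∑ l ∈ Finset.range t, (weierstrassEvenCoeff t l ^ 2 - weierstrassOddCoeff t l ^ 2) = 0 := by
  rcases t with _ | s
  · simp
  have hlow : ∀ l ∈ Finset.range s,
      weierstrassEvenCoeff (s + 1) l ^ 2 - weierstrassOddCoeff (s + 1) l ^ 2 = 2 := by
    intro l hl
    have hl : l < s := Finset.mem_range.1 hl
    rw [weierstrassCoeff_sq_sub_sq (by omega), if_pos (by omega)]
  rw [Finset.sum_range_succ, Finset.sum_congr rfl hlow, weierstrassCoeff_sq_sub_sq (by omega),
    if_neg (by omega)]
  simp only [Finset.sum_const, Finset.card_range, nsmul_eq_mul]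
  push_cast
  ring

theorem weierstrassPoly_pair_sq_add_sq (hl : l < t) :
    weierstrassPoly t ⟨2 * l, by omega⟩ ^ 2 + weierstrassPoly t ⟨2 * l + 1, by omega⟩ ^ 2 =
      (2 * (weierstrassEvenCoeff t l ^ 2 - weierstrassOddCoeff t l ^ 2)) • X ^ (2 * t - 1) := by
  have hX : (X : ℂ[X]) ^ (2 * t - 1) = X ^ l * X ^ (2 * t - l - 1) := by
    rw [← pow_add]; congr 1; omega
  have hC : C (weierstrassEvenCoeff t l) ^ 2 + C (weierstrassOddCoeff t l) ^ 2 = 0 := by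
    rw [← map_pow, ← map_pow, ← map_add, weierstrassCoeff_sq_add_sq hl, map_zero]
  rw [weierstrassPoly_two_mul hl, weierstrassPoly_two_mul_add_one hl, hX]
  simp only [smul_eq_C_mul, map_mul, map_sub, map_pow, map_ofNat]
  linear_combination (X ^ l * X ^ l + X ^ (2 * t - l - 1) * X ^ (2 * t - l - 1)) * hC

theorem sum_weierstrassPoly_sq (t : ℕ) : ∑ k : Fin (2 * t), weierstrassPoly t k ^ 2 = 0 := by
  simp only [Fin.sum_univ_two_mul, fun l : Fin t => weierstrassPoly_pair_sq_add_sq l.isLt]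
  rw [← Finset.sum_smul, ← Finset.mul_sum,
    Fin.sum_univ_eq_sum_range (fun l => weierstrassEvenCoeff t l ^ 2 - weierstrassOddCoeff t l ^ 2),
    sum_weierstrassCoeff_sq_sub_sq, mul_zero, zero_smul]

theorem X_pow_mem_span_weierstrassPoly (ht : 2 ≤ t) (hl : l < t) :
    X ^ l ∈ Submodule.span ℂ (Set.range (weierstrassPoly t)) ∧
      X ^ (2 * t - l - 1) ∈ Submodule.span ℂ (Set.range (weierstrassPoly t)) := by
  have hpair := Submodule.mem_span_smul_add_smul_sub (weierstrassEvenCoeff_ne_zero ht (l := l))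
    (weierstrassOddCoeff_ne_zero ht (l := l)) (X ^ l : ℂ[X]) (X ^ (2 * t - l - 1))
  rw [← weierstrassPoly_two_mul hl, ← weierstrassPoly_two_mul_add_one hl] at hpair
  have hle : Submodule.span ℂ {weierstrassPoly t ⟨2 * l, by omega⟩,
      weierstrassPoly t ⟨2 * l + 1, by omega⟩} ≤ Submodule.span ℂ (Set.range (weierstrassPoly t)) :=
    Submodule.span_mono (Set.pair_subset ⟨_, rfl⟩ ⟨_, rfl⟩)
  exact ⟨hle hpair.1, hle hpair.2⟩

theorem degreeLT_le_span_weierstrassPoly (ht : 2 ≤ t) :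
    degreeLT ℂ (2 * t) ≤ Submodule.span ℂ (Set.range (weierstrassPoly t)) := by
  rw [degreeLT_eq_span_X_pow, Submodule.span_le]
  simp only [Finset.coe_image, Finset.coe_range, Set.image_subset_iff]
  intro a (ha : a < 2 * t)
  rcases lt_or_ge a t with hat | hat
  · exact (X_pow_mem_span_weierstrassPoly ht hat).1
  · have := (X_pow_mem_span_weierstrassPoly ht (l := 2 * t - a - 1) (by omega)).2
    rwa [show 2 * t - (2 * t - a - 1) - 1 = a by omega] at this

theorem linearIndependent_weierstrassPoly (ht : 2 ≤ t) :
    LinearIndependent ℂ (weierstrassPoly t) := by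
  have := Module.Finite.span_of_finite ℂ (Set.finite_range (weierstrassPoly t))
  rw [linearIndependent_iff_card_le_finrank_span, Fintype.card_fin, Set.finrank]
  calc 2 * t = Module.finrank ℂ (degreeLT ℂ (2 * t)) := by
        rw [(degreeLTEquiv ℂ (2 * t)).finrank_eq, Module.finrank_fin_fun]
    _ ≤ _ := Submodule.finrank_mono (degreeLT_le_span_weierstrassPoly ht)

end

/-- For every even integer `m = 2t` with `t ≥ 2`, the polynomials
`h_1, …, h_m` are linearly independent over `ℂ` (hence form a basis of the
space of polynomials of degree at most `m − 1`), and moreover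
`∑_{k=1}^{m} h_k(z)^2 = 0` identically. -/
theorem weierstrassPoly_independent_and_isotropic (t : ℕ) (ht : 2 ≤ t) :
    LinearIndependent ℂ (weierstrassPoly t) ∧
      ∑ k : Fin (2 * t), (weierstrassPoly t k) ^ 2 = 0 :=
  ⟨linearIndependent_weierstrassPoly ht, sum_weierstrassPoly_sq t⟩
end
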